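/- arXiv:2405.02854 — 3 statements merged into one kernel-verified Lean document; each statement's English description precedes it below -/
import Mathlib

section
/- For real x > 0, Γ̃(x) = ∫₀^∞ e^(−x·t)·(1 − e^(−2t))^(−1/2) dt; that is, Γ̃ is the Laplace transform of t ↦ (1 − e^(−2t))^(−1/2). -/
noncomputable def Gammat (x : ℝ) : ℝ :=
  Real.Gamma (x / 2) * Real.sqrt Real.pi / (2 * Real.Gamma ((x + 1) / 2))

open MeasureTheory Real Set

lemma real_beta (a b : ℝ) (ha : 0 < a) (hb : 0 < b) :
    Real.Gamma a * Real.Gamma b =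
      Real.Gamma (a + b) * ∫ u in (0:ℝ)..1, u ^ (a - 1) * (1 - u) ^ (b - 1) := by
  have h := Complex.Gamma_mul_Gamma_eq_betaIntegral
    (s := (a : ℂ)) (t := (b : ℂ)) (by simpa using ha) (by simpa using hb)
  have hbeta : Complex.betaIntegral a b =
      ((∫ u in (0:ℝ)..1, u ^ (a - 1) * (1 - u) ^ (b - 1) : ℝ) : ℂ) := by
    rw [Complex.betaIntegral, ← intervalIntegral.integral_ofReal]
    refine intervalIntegral.integral_congr fun u hu => ?_
    rw [uIcc_of_le zero_le_one] at hu
    rw [Complex.ofReal_mul, Complex.ofReal_cpow hu.1, Complex.ofReal_cpow (by linarith [hu.2])]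
    push_cast
    ring
  rw [hbeta] at h
  have : ((a : ℂ) + b) = ((a + b : ℝ) : ℂ) := by push_cast; ring
  rw [this, Complex.Gamma_ofReal, Complex.Gamma_ofReal, Complex.Gamma_ofReal,
    ← Complex.ofReal_mul, ← Complex.ofReal_mul] at h
  exact_mod_cast h

theorem Gammat_laplace_transform (x : ℝ) (hx : 0 < x) :
    Gammat x = ∫ t in Set.Ioi (0:ℝ), Real.exp (-x * t) * (1 - Real.exp (-2 * t)) ^ (-(1/2) : ℝ) := by
  set g : ℝ → ℝ := fun u => (1/2) * (u ^ (x/2 - 1) * (1 - u) ^ (-(1/2) : ℝ)) with hg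
  set f : ℝ → ℝ := fun t => Real.exp (-2 * t) with hf
  have hderiv : ∀ t ∈ Ioi (0:ℝ), HasDerivWithinAt f (-2 * Real.exp (-2 * t)) (Ioi 0) t := by
    intro t ht
    have h1 : HasDerivAt (fun t : ℝ => -2 * t) (-2) t := by
      simpa using (hasDerivAt_id t).const_mul (-2)
    have := h1.exp
    simpa [hf, mul_comm] using this.hasDerivWithinAt
  have hinj : InjOn f (Ioi 0) := fun s _ t _ h => by
    have := Real.exp_injective h
    linarith [this]
  have himg : f '' Ioi 0 = Ioo (0:ℝ) 1 := by
    ext u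
    constructor
    · rintro ⟨t, ht, rfl⟩
      exact ⟨Real.exp_pos _, Real.exp_lt_one_iff.2 (by simp at ht ⊢; linarith)⟩
    · rintro ⟨h0, h1⟩
      refine ⟨-Real.log u / 2, ?_, ?_⟩
      · have := Real.log_neg h0 h1
        simp only [mem_Ioi]; linarith
      · simp only [hf]
        rw [show -2 * (-Real.log u / 2) = Real.log u by ring, Real.exp_log h0]
  have key := integral_image_eq_integral_abs_deriv_smul measurableSet_Ioi hderiv hinj g
  rw [himg] at key
  have hrhs : ∫ t in Ioi (0:ℝ), |(-2 * Real.exp (-2 * t))| • g (f t)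
      = ∫ t in Ioi (0:ℝ), Real.exp (-x * t) * (1 - Real.exp (-2 * t)) ^ (-(1/2) : ℝ) := by
    refine setIntegral_congr_fun measurableSet_Ioi fun t ht => ?_
    have hpos : (0:ℝ) < Real.exp (-2 * t) := Real.exp_pos _
    simp only [hg, hf, smul_eq_mul, abs_mul, abs_neg, abs_of_pos hpos, abs_two]
    rw [Real.rpow_def_of_pos hpos, Real.log_exp]
    have he : Real.exp (-2 * t) * Real.exp (-2 * t * (x / 2 - 1)) = Real.exp (-x * t) := by
      rw [← Real.exp_add]; congr 1; ring
    rw [← he]; ring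
  rw [hrhs] at key
  rw [← key]
  -- now reduce to the beta integral
  have hIoo : ∫ u in Ioo (0:ℝ) 1, g u
      = (1/2) * ∫ u in (0:ℝ)..1, u ^ (x/2 - 1) * (1 - u) ^ ((1:ℝ)/2 - 1) := by
    rw [intervalIntegral.integral_of_le zero_le_one, ← integral_Ioc_eq_integral_Ioo,
      ← integral_const_mul]
    norm_num [hg]
  have hbeta := real_beta (x/2) (1/2) (by linarith) (by norm_num)
  have hne : Real.Gamma ((x+1)/2) ≠ 0 :=
    (Real.Gamma_pos_of_pos (by linarith)).ne'
  rw [show x/2 + 1/2 = (x+1)/2 by ring] at hbeta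
  have hI : ∫ u in (0:ℝ)..1, u ^ (x/2 - 1) * (1 - u) ^ ((1:ℝ)/2 - 1)
      = Real.Gamma (x/2) * Real.Gamma (1/2) / Real.Gamma ((x+1)/2) := by
    field_simp at hbeta ⊢
    linarith [hbeta]
  rw [hIoo, hI, Real.Gamma_one_half_eq, Gammat]
  ring
end

section
/- For real x > 0, Γ̃(x) = lim_{m→∞} (1/x)·∏_{k=1}^{m} (2k/(x+2k))·((x+2k−1)/(2k−1)); equivalently, x·Γ̃(x) = ∏_{k=1}^{∞} (2k(x+2k−1))/((2k−1)(x+2k)). -/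
/-!
Each factor of the product is `(k / (x/2 + k)) · (((x+1)/2 + k - 1) / (1/2 + k - 1))`, so the
partial product splits into two ratios of rising factorials. Euler's limit formula
`Γ(s) = lim m^s m! / (s (s+1) ⋯ (s+m))` shows that `∏_{j<m} (s+j)/(t+j) · m^(t-s) → Γ(t)/Γ(s)`;
the powers of `m` from the two ratios cancel, leaving `Γ(x/2+1) Γ(1/2) / Γ((x+1)/2)`.
-/

open Filter Topology

open Finset Real

theorem tendsto_add_div_add_natCast (s t : ℝ) :
    Tendsto (fun m : ℕ => (t + m) / (s + m)) atTop (𝓝 1) := by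
  have hlin : Tendsto (fun m : ℕ => s + m) atTop atTop :=
    tendsto_atTop_add_const_left _ _ tendsto_natCast_atTop_atTop
  have h := (tendsto_const_nhds (x := t - s)).div_atTop hlin |>.const_add 1
  rw [add_zero] at h
  refine h.congr' ?_
  filter_upwards [hlin.eventually_gt_atTop 0] with m hm
  field_simp
  ring

theorem prod_Icc_one_eq_prod_range {M : Type*} [CommMonoid M] (f : ℕ → M) (m : ℕ) :
    ∏ k ∈ Icc 1 m, f k = ∏ j ∈ range m, f (1 + j) := by
  rw [← Ico_add_one_right_eq_Icc, prod_Ico_eq_prod_range]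
  simp

namespace Real

theorem GammaSeq_div_GammaSeq (s t : ℝ) {m : ℕ} (hm : m ≠ 0) :
    GammaSeq t m / GammaSeq s m = (m : ℝ) ^ (t - s) * ∏ j ∈ range (m + 1), (s + j) / (t + j) := by
  have hm₀ : (0 : ℝ) < m := by positivity
  rw [GammaSeq, GammaSeq, prod_div_distrib, rpow_sub hm₀]
  have : (m.factorial : ℝ) ≠ 0 := by positivity
  field_simp

theorem tendsto_prod_div_mul_rpow (s t : ℝ) (hs : ∀ n : ℕ, s ≠ -n) :
    Tendsto (fun m : ℕ => (∏ j ∈ range m, (s + j) / (t + j)) * (m : ℝ) ^ (t - s)) atTop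
      (𝓝 (Gamma t / Gamma s)) := by
  have h := ((GammaSeq_tendsto_Gamma t).div (GammaSeq_tendsto_Gamma s) (Gamma_ne_zero hs)).mul
    (tendsto_add_div_add_natCast s t)
  rw [mul_one] at h
  refine h.congr' ?_
  filter_upwards [eventually_ne_atTop 0,
    (tendsto_atTop_add_const_left _ s tendsto_natCast_atTop_atTop).eventually_gt_atTop 0,
    (tendsto_atTop_add_const_left _ t tendsto_natCast_atTop_atTop).eventually_gt_atTop 0]
    with m hm hsm htm
  rw [Pi.div_apply, GammaSeq_div_GammaSeq s t hm, prod_range_succ]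
  field_simp

end Real

theorem Gammat_prod_repr (x : ℝ) (hx : 0 < x) :
    Tendsto (fun m : ℕ => (1 / x) * ∏ k ∈ Finset.Icc 1 m,
        (2 * (k : ℝ) / (x + 2 * k)) * ((x + 2 * k - 1) / (2 * k - 1)))
      atTop (𝓝 (Gammat x)) := by
  have hfactor (k : ℕ) : 2 * ((1 + k : ℕ) : ℝ) / (x + 2 * (1 + k : ℕ)) *
      ((x + 2 * (1 + k : ℕ) - 1) / (2 * (1 + k : ℕ) - 1)) =
      (1 + k) / (x / 2 + 1 + k) * (((x + 1) / 2 + k) / (1 / 2 + k)) := by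
    push_cast
    rw [show x + 2 * (1 + (k : ℝ)) - 1 = 2 * ((x + 1) / 2 + k) by ring,
      show 2 * (1 + (k : ℝ)) - 1 = 2 * (1 / 2 + k) by ring,
      show x + 2 * (1 + (k : ℝ)) = 2 * (x / 2 + 1 + k) by ring,
      mul_div_mul_left _ _ two_ne_zero, mul_div_mul_left _ _ two_ne_zero]
  have hpos (s : ℝ) (hs : 0 < s) (n : ℕ) : s ≠ -n := by
    have : (0 : ℝ) ≤ n := n.cast_nonneg
    linarith
  have hfirst := tendsto_prod_div_mul_rpow 1 (x / 2 + 1) (hpos 1 one_pos)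
  have hsecond := tendsto_prod_div_mul_rpow ((x + 1) / 2) (1 / 2) (hpos _ (by positivity))
  have hlimit : 1 / x * (Gamma (x / 2 + 1) / Gamma 1 * (Gamma (1 / 2) / Gamma ((x + 1) / 2))) =
      Gammat x := by
    rw [Gamma_one, Gamma_add_one (by positivity), Gamma_one_half_eq, Gammat]
    field_simp
  rw [← hlimit]
  refine ((hfirst.mul hsecond).const_mul (1 / x)).congr' ?_
  filter_upwards [eventually_gt_atTop 0] with m hm
  have hrpow : (m : ℝ) ^ (x / 2 + 1 - 1) * (m : ℝ) ^ (1 / 2 - (x + 1) / 2) = 1 := by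
    rw [← rpow_add (by positivity)]
    ring_nf
    exact rpow_zero _
  rw [prod_Icc_one_eq_prod_range]
  simp only [hfactor]
  rw [prod_mul_distrib, mul_mul_mul_comm, hrpow, mul_one]
end

section
/- The function x ↦ log Γ̃(x) is convex on (0, ∞). -/
/-! Since `Γ(1/2) = √π`, the Beta integral gives `Γ̃(x) = B(x/2, 1/2) / 2`. The integrand
`x ^ (u - 1) * (1 - x) ^ (v - 1)` is multiplicatively affine in `u`, so Hölder's inequality with
exponents `1/a`, `1/b` yields `B(a s + b t, v) ≤ B(s, v) ^ a * B(t, v) ^ b`, i.e. `log B(·, v)` is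
convex, and so is its composition with `x ↦ x / 2`. -/

open Real MeasureTheory Set

theorem integral_rpow_mul_rpow_le {α : Type*} [MeasurableSpace α] {μ : Measure α}
    {f g : α → ℝ} (hf₀ : 0 ≤ᵐ[μ] f) (hg₀ : 0 ≤ᵐ[μ] g) (hf : Integrable f μ)
    (hg : Integrable g μ) {p q : ℝ} (hp : 0 ≤ p) (hq : 0 ≤ q) (hpq : p + q = 1) :
    ∫ x, f x ^ p * g x ^ q ∂μ ≤ (∫ x, f x ∂μ) ^ p * (∫ x, g x ∂μ) ^ q := by
  have hfg₀ : 0 ≤ᵐ[μ] fun x => f x ^ p * g x ^ q := by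
    filter_upwards [hf₀, hg₀] with x hfx hgx
    exact mul_nonneg (rpow_nonneg hfx p) (rpow_nonneg hgx q)
  have hfg : AEStronglyMeasurable (fun x => f x ^ p * g x ^ q) μ :=
    ((hf.aemeasurable.pow_const p).mul (hg.aemeasurable.pow_const q)).aestronglyMeasurable
  rw [integral_eq_lintegral_of_nonneg_ae hf₀ hf.1, integral_eq_lintegral_of_nonneg_ae hg₀ hg.1,
    integral_eq_lintegral_of_nonneg_ae hfg₀ hfg, ENNReal.toReal_rpow, ENNReal.toReal_rpow,
    ← ENNReal.toReal_mul]
  have hF := (lintegral_ofReal_ne_top_iff_integrable hf.1 hf₀).2 hf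
  have hG := (lintegral_ofReal_ne_top_iff_integrable hg.1 hg₀).2 hg
  refine ENNReal.toReal_mono (ENNReal.mul_ne_top (ENNReal.rpow_ne_top_of_nonneg hp hF)
    (ENNReal.rpow_ne_top_of_nonneg hq hG)) ?_
  calc ∫⁻ x, ENNReal.ofReal (f x ^ p * g x ^ q) ∂μ
      = ∫⁻ x, ENNReal.ofReal (f x) ^ p * ENNReal.ofReal (g x) ^ q ∂μ := by
        refine lintegral_congr_ae ?_
        filter_upwards [hf₀, hg₀] with x hfx hgx
        rw [ENNReal.ofReal_mul (rpow_nonneg hfx p), ENNReal.ofReal_rpow_of_nonneg hfx hp,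
          ENNReal.ofReal_rpow_of_nonneg hgx hq]
    _ ≤ _ := ENNReal.lintegral_mul_norm_pow_le hf.aemeasurable.ennreal_ofReal
        hg.aemeasurable.ennreal_ofReal hp hq hpq

theorem convexOn_log_of_le_rpow_mul_rpow {E : Type*} [AddCommMonoid E] [Module ℝ E]
    {S : Set E} (hS : Convex ℝ S) {g : E → ℝ} (hg : ∀ x ∈ S, 0 < g x)
    (hle : ∀ x ∈ S, ∀ y ∈ S, ∀ a b : ℝ, 0 < a → 0 < b → a + b = 1 →
      g (a • x + b • y) ≤ g x ^ a * g y ^ b) :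
    ConvexOn ℝ S (log ∘ g) := by
  refine convexOn_iff_forall_pos.mpr ⟨hS, fun x hx y hy a b ha hb hab => ?_⟩
  simp only [Function.comp_apply, smul_eq_mul]
  rw [← log_rpow (hg x hx), ← log_rpow (hg y hy),
    ← log_mul (rpow_pos_of_pos (hg x hx) a).ne' (rpow_pos_of_pos (hg y hy) b).ne']
  exact log_le_log (hg _ (hS hx hy ha.le hb.le hab)) (hle x hx y hy a b ha hb hab)

namespace Real

noncomputable def betaIntegral (u v : ℝ) : ℝ :=
  ∫ x in (0 : ℝ)..1, x ^ (u - 1) * (1 - x) ^ (v - 1)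

theorem ofReal_betaIntegrand {u v x : ℝ} (hx : x ∈ Icc (0 : ℝ) 1) :
    ((x ^ (u - 1) * (1 - x) ^ (v - 1) : ℝ) : ℂ) =
      (x : ℂ) ^ ((u : ℂ) - 1) * (1 - (x : ℂ)) ^ ((v : ℂ) - 1) := by
  push_cast [Complex.ofReal_cpow hx.1, Complex.ofReal_cpow (sub_nonneg.2 hx.2)]
  rfl

theorem ofReal_betaIntegral (u v : ℝ) : (betaIntegral u v : ℂ) = Complex.betaIntegral u v := by
  rw [betaIntegral, Complex.betaIntegral, ← intervalIntegral.integral_ofReal]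
  refine intervalIntegral.integral_congr fun x hx => ofReal_betaIntegrand ?_
  rwa [uIcc_of_le zero_le_one] at hx

theorem integrableOn_betaIntegrand {u v : ℝ} (hu : 0 < u) (hv : 0 < v) :
    IntegrableOn (fun x : ℝ => x ^ (u - 1) * (1 - x) ^ (v - 1)) (Ioo 0 1) := by
  have h := Complex.betaIntegral_convergent (u := u) (v := v) (by simpa) (by simpa)
  rw [intervalIntegrable_iff_integrableOn_Ioc_of_le zero_le_one] at h
  have h' := (h.mono_set Ioo_subset_Ioc_self).congr_fun
    (fun x hx => (ofReal_betaIntegrand (Ioo_subset_Icc_self hx)).symm) measurableSet_Ioo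
  simpa [IntegrableOn] using h'.re

theorem betaIntegral_eq_Gamma_mul_Gamma_div {u v : ℝ} (hu : 0 < u) (hv : 0 < v) :
    betaIntegral u v = Gamma u * Gamma v / Gamma (u + v) := by
  have h := Complex.Gamma_mul_Gamma_eq_betaIntegral (s := u) (t := v) (by simpa) (by simpa)
  rw [← ofReal_betaIntegral, ← Complex.ofReal_add, Complex.Gamma_ofReal, Complex.Gamma_ofReal,
    Complex.Gamma_ofReal] at h
  rw [eq_div_iff (Gamma_pos_of_pos (add_pos hu hv)).ne']
  exact_mod_cast (h.trans (mul_comm _ _)).symm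

theorem betaIntegral_pos {u v : ℝ} (hu : 0 < u) (hv : 0 < v) : 0 < betaIntegral u v := by
  rw [betaIntegral_eq_Gamma_mul_Gamma_div hu hv]
  have := Gamma_pos_of_pos hu
  have := Gamma_pos_of_pos hv
  have := Gamma_pos_of_pos (add_pos hu hv)
  positivity

theorem betaIntegral_eq_setIntegral_Ioo (u v : ℝ) :
    betaIntegral u v = ∫ x in Ioo (0 : ℝ) 1, x ^ (u - 1) * (1 - x) ^ (v - 1) := by
  rw [betaIntegral, intervalIntegral.integral_of_le zero_le_one, integral_Ioc_eq_integral_Ioo]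

theorem betaIntegral_mul_add_mul_le {s t v a b : ℝ} (hs : 0 < s) (ht : 0 < t) (hv : 0 < v)
    (ha : 0 ≤ a) (hb : 0 ≤ b) (hab : a + b = 1) :
    betaIntegral (a * s + b * t) v ≤ betaIntegral s v ^ a * betaIntegral t v ^ b := by
  have hsplit : ∀ x ∈ Ioo (0 : ℝ) 1, x ^ (a * s + b * t - 1) * (1 - x) ^ (v - 1) =
      (x ^ (s - 1) * (1 - x) ^ (v - 1)) ^ a * (x ^ (t - 1) * (1 - x) ^ (v - 1)) ^ b := by
    rintro x ⟨hx, hx'⟩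
    have hy : 0 < 1 - x := sub_pos.2 hx'
    rw [mul_rpow (rpow_nonneg hx.le _) (rpow_nonneg hy.le _),
      mul_rpow (rpow_nonneg hx.le _) (rpow_nonneg hy.le _), ← rpow_mul hx.le, ← rpow_mul hx.le,
      ← rpow_mul hy.le, ← rpow_mul hy.le, mul_mul_mul_comm, ← rpow_add hx, ← rpow_add hy]
    congr 2
    · linear_combination hab
    · linear_combination (1 - v) * hab
  have hnonneg : ∀ u : ℝ, 0 ≤ᵐ[volume.restrict (Ioo (0 : ℝ) 1)]
      fun x : ℝ => x ^ (u - 1) * (1 - x) ^ (v - 1) := fun u =>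
    ae_restrict_of_forall_mem measurableSet_Ioo fun x hx =>
      mul_nonneg (rpow_nonneg hx.1.le _) (rpow_nonneg (sub_pos.2 hx.2).le _)
  simp only [betaIntegral_eq_setIntegral_Ioo, setIntegral_congr_fun measurableSet_Ioo hsplit]
  exact integral_rpow_mul_rpow_le (hnonneg s) (hnonneg t) (integrableOn_betaIntegrand hs hv)
    (integrableOn_betaIntegrand ht hv) ha hb hab

theorem convexOn_log_betaIntegral_left {v : ℝ} (hv : 0 < v) :
    ConvexOn ℝ (Ioi 0) fun u => log (betaIntegral u v) :=
  convexOn_log_of_le_rpow_mul_rpow (convex_Ioi 0) (fun _ hu => betaIntegral_pos hu hv)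
    fun _ hs _ ht _ _ ha hb hab => betaIntegral_mul_add_mul_le hs ht hv ha.le hb.le hab

end Real

theorem Gammat_eq_betaIntegral_div_two {x : ℝ} (hx : 0 < x) :
    Gammat x = betaIntegral (x / 2) (1 / 2) / 2 := by
  rw [Gammat, betaIntegral_eq_Gamma_mul_Gamma_div (half_pos hx) one_half_pos, Gamma_one_half_eq,
    show x / 2 + 1 / 2 = (x + 1) / 2 by ring, div_div, mul_comm (Gamma _) 2]

theorem Gammat_log_convex :
    ConvexOn ℝ (Set.Ioi (0 : ℝ)) (fun x => Real.log (Gammat x)) := by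
  have hB : ConvexOn ℝ (Ioi 0) fun x => log (betaIntegral (x / 2) (1 / 2)) := by
    convert (convexOn_log_betaIntegral_left one_half_pos).comp_linearMap
      ((2⁻¹ : ℝ) • LinearMap.id) using 1
    all_goals ext x; simp [div_eq_inv_mul]
  refine (hB.sub (concaveOn_const (log 2) (convex_Ioi 0))).congr fun x hx => ?_
  rw [Gammat_eq_betaIntegral_div_two hx, log_div (betaIntegral_pos (half_pos hx) one_half_pos).ne'
    two_ne_zero]
  rfl
end
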